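/- For every j ∈ {1,…,m}∖{p} and every u ∈ (x_{j−1}, x_j), the product of the boundary values of D from above and below equals s_j: lim_{ε→0⁺} D(u+iε)·D(u−iε) = s_j. -/

import Mathlib

/-- The principal complex square root. -/
noncomputable def csqrt (w : ℂ) : ℂ := w ^ ((1 : ℂ) / 2)

/-- `β_j = (1/(2πi)) log(s_j/s_{j+1})`. -/
noncomputable def betaCoef (s : ℕ → ℝ) (j : ℕ) : ℂ :=
  1 / (2 * ↑Real.pi * Complex.I) * ↑(Real.log (s j / s (j + 1)))

/-- `R_j(z)` for `0 ≤ j ≤ p−2` (so `x_j < a < b`). -/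
noncomputable def Rlow (a b xj : ℝ) (z : ℂ) : ℂ :=
  (csqrt (z - ↑a) * ↑(Real.sqrt (b - xj)) - csqrt (z - ↑b) * ↑(Real.sqrt (a - xj))) /
  (csqrt (z - ↑a) * ↑(Real.sqrt (b - xj)) + csqrt (z - ↑b) * ↑(Real.sqrt (a - xj)))

/-- `R_j(z)` for `p+1 ≤ j ≤ m` (so `a < b < x_j`). -/
noncomputable def Rhigh (a b xj : ℝ) (z : ℂ) : ℂ :=
  (csqrt (z - ↑b) * ↑(Real.sqrt (xj - a)) - csqrt (z - ↑a) * ↑(Real.sqrt (xj - b))) /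
  (csqrt (z - ↑b) * ↑(Real.sqrt (xj - a)) + csqrt (z - ↑a) * ↑(Real.sqrt (xj - b)))

/-- The Szegő-type function `D` of the `s_p = 0` analysis:
`D(z) = ∏_{j=0}^{p−2} R_j(z)^{β_j} · ∏_{j=p+1}^m R_j(z)^{β_j}` for `Im z > 0`,
and the same product with exponents `−β_j` for `Im z < 0`. -/
noncomputable def szegoDGap (m p : ℕ) (x s : ℕ → ℝ) (z : ℂ) : ℂ :=
  if 0 < z.im then
    (∏ j ∈ Finset.range (p - 1), Rlow (x (p - 1)) (x p) (x j) z ^ betaCoef s j) *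
      (∏ j ∈ Finset.Icc (p + 1) m, Rhigh (x (p - 1)) (x p) (x j) z ^ betaCoef s j)
  else
    (∏ j ∈ Finset.range (p - 1), Rlow (x (p - 1)) (x p) (x j) z ^ (-betaCoef s j)) *
      (∏ j ∈ Finset.Icc (p + 1) m, Rhigh (x (p - 1)) (x p) (x j) z ^ (-betaCoef s j))

open Complex Filter Set Topology
set_option maxHeartbeats 1000000

lemma csqrt_sq {w : ℂ} (hw : w ≠ 0) : csqrt w * csqrt w = w := by
  rw [csqrt, ← Complex.cpow_add _ _ hw]; norm_num

lemma csqrt_def {w : ℂ} (hw : w ≠ 0) : csqrt w = Complex.exp (Complex.log w * (1/2)) := by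
  rw [csqrt, Complex.cpow_def_of_ne_zero hw]

lemma arg_pos_of_im_pos {w : ℂ} (hw : 0 < w.im) : 0 < w.arg := by
  rcases lt_or_eq_of_le (Complex.arg_nonneg_iff.mpr hw.le) with h | h
  · exact h
  · exfalso
    have := (Complex.arg_eq_zero_iff.mp h.symm).2
    exact absurd this (ne_of_gt hw)

lemma csqrt_im_arg {w : ℂ} (hw0 : w ≠ 0) : (Complex.log w * (1/2)).im = w.arg / 2 := by
  simp [Complex.mul_im, Complex.log_im, Complex.log_re]; ring

lemma csqrt_re_pos {w : ℂ} (hw : 0 < w.im) : 0 < (csqrt w).re := by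
  have hw0 : w ≠ 0 := fun h => by simp [h] at hw
  have h1 : 0 < w.arg := arg_pos_of_im_pos hw
  have h2 : w.arg < Real.pi := Complex.arg_lt_pi_iff.mpr (Or.inr (ne_of_gt hw))
  rw [csqrt_def hw0, Complex.exp_re, csqrt_im_arg hw0]
  have : Real.cos (w.arg / 2) > 0 := Real.cos_pos_of_mem_Ioo ⟨by linarith [Real.pi_pos], by linarith⟩
  positivity

lemma csqrt_im_pos {w : ℂ} (hw : 0 < w.im) : 0 < (csqrt w).im := by
  have hw0 : w ≠ 0 := fun h => by simp [h] at hw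
  have h1 : 0 < w.arg := arg_pos_of_im_pos hw
  have h2 : w.arg < Real.pi := Complex.arg_lt_pi_iff.mpr (Or.inr (ne_of_gt hw))
  rw [csqrt_def hw0, Complex.exp_im, csqrt_im_arg hw0]
  have : Real.sin (w.arg / 2) > 0 := Real.sin_pos_of_pos_of_lt_pi (by linarith) (by linarith [Real.pi_pos])
  positivity

lemma key_ineq {a b c d : ℝ} (ha : 0 < a) (hb : 0 < b) (hc : 0 < c) (hd : 0 < d)
    (h1 : a * b = c * d) (h2 : c^2 - d^2 < a^2 - b^2) : b * c < a * d := by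
  have h1sq : a^2 * b^2 = c^2 * d^2 := by rw [← mul_pow, ← mul_pow, h1]
  have hm : a^2 * (c^2 - d^2) < a^2 * (a^2 - b^2) :=
    mul_lt_mul_of_pos_left h2 (by positivity)
  have hgt : c^2 < a^2 := by nlinarith [hm, h1sq]
  -- b*c < a*d :  a*(a*d - b*c) = d*(a^2-c^2) > 0  using a*b*c = c^2*d
  nlinarith [mul_pos ha hd, mul_pos hd (sub_pos.mpr hgt), hgt, h1]

/-- Sign of the imaginary part of `(S₁ p - S₂ q)/(S₁ p + S₂ q)` where `Sᵢ = csqrt wᵢ`,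
both `wᵢ` in the upper half plane with the same imaginary part and `w₂.re < w₁.re`. -/
lemma im_ratio_neg {w₁ w₂ : ℂ} (h1 : 0 < w₁.im) (h2 : 0 < w₂.im)
    (him : w₁.im = w₂.im) (hre : w₂.re < w₁.re) {p q : ℝ} (hp : 0 < p) (hq : 0 < q) :
    ((csqrt w₁ * ↑p - csqrt w₂ * ↑q) / (csqrt w₁ * ↑p + csqrt w₂ * ↑q)).im < 0 := by
  have hw10 : w₁ ≠ 0 := fun h => by simp [h] at h1
  have hw20 : w₂ ≠ 0 := fun h => by simp [h] at h2
  set α := (csqrt w₁).re with hα'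
  set β := (csqrt w₁).im with hβ'
  set γ := (csqrt w₂).re with hγ'
  set δ := (csqrt w₂).im with hδ'
  have hα : 0 < α := csqrt_re_pos h1
  have hβ : 0 < β := csqrt_im_pos h1
  have hγ : 0 < γ := csqrt_re_pos h2
  have hδ : 0 < δ := csqrt_im_pos h2
  have e1 := csqrt_sq hw10
  have e2 := csqrt_sq hw20
  have hre1 : α * α - β * β = w₁.re := by conv_rhs => rw [← e1, Complex.mul_re]
  have him1 : α * β + β * α = w₁.im := by conv_rhs => rw [← e1, Complex.mul_im]
  have hre2 : γ * γ - δ * δ = w₂.re := by conv_rhs => rw [← e2, Complex.mul_re]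
  have him2 : γ * δ + δ * γ = w₂.im := by conv_rhs => rw [← e2, Complex.mul_im]
  have hkey : β * γ < α * δ := by
    apply key_ineq hα hβ hγ hδ
    · nlinarith [him1, him2, him]
    · nlinarith [hre1, hre2, hre]
  -- denominator
  set D := csqrt w₁ * ↑p + csqrt w₂ * ↑q with hD
  have hDim : D.im = β*p + δ*q := by
    simp [hD, Complex.add_im, Complex.mul_im, ← hβ', ← hδ']
  have hDne : Complex.normSq D ≠ 0 := by
    intro h
    have := (Complex.normSq_eq_zero.mp h)
    rw [this] at hDim
    simp at hDim
    nlinarith [mul_pos hβ hp, mul_pos hδ hq]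
  have hDpos : 0 < Complex.normSq D := lt_of_le_of_ne (Complex.normSq_nonneg D) (Ne.symm hDne)
  rw [Complex.div_im]
  have hNim : (csqrt w₁ * ↑p - csqrt w₂ * ↑q).im = β*p - δ*q := by
    simp [Complex.sub_im, Complex.mul_im, ← hβ', ← hδ']
  have hNre : (csqrt w₁ * ↑p - csqrt w₂ * ↑q).re = α*p - γ*q := by
    simp [Complex.sub_re, Complex.mul_re, ← hα', ← hγ']
  have hDre : D.re = α*p + γ*q := by
    simp [hD, Complex.add_re, Complex.mul_re, ← hα', ← hγ']
  rw [hNim, hNre, hDre, hDim, div_sub_div_same]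
  apply div_neg_of_neg_of_pos _ hDpos
  nlinarith [mul_pos hp hq, hkey]

lemma arg_ne_pi_of_im_ne_zero {w : ℂ} (hw : w.im ≠ 0) : w.arg ≠ Real.pi := by
  intro h
  exact hw (Complex.arg_eq_pi_iff.mp h).2

lemma pair_eq {w : ℂ} (hw : w.im ≠ 0) (L : ℝ) :
    w ^ (1/(2*(Real.pi:ℂ)*Complex.I) * (L:ℂ)) *
      ((starRingEnd ℂ) w) ^ (-(1/(2*(Real.pi:ℂ)*Complex.I) * (L:ℂ))) =
    ↑(Real.exp (L * w.arg / Real.pi)) := by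
  have hw0 : w ≠ 0 := fun h => by simp [h] at hw
  have hcw0 : (starRingEnd ℂ) w ≠ 0 := by simpa using hw0
  have harg : w.arg ≠ Real.pi := arg_ne_pi_of_im_ne_zero hw
  rw [Complex.cpow_def_of_ne_zero hw0, Complex.cpow_def_of_ne_zero hcw0,
    Complex.log_conj _ harg, ← Complex.exp_add]
  rw [Complex.ofReal_exp]
  congr 1
  have hlog : Complex.log w - (starRingEnd ℂ) (Complex.log w)
      = (2 * (Complex.log w).im : ℝ) * Complex.I := Complex.sub_conj _
  have him : (Complex.log w).im = w.arg := Complex.log_im w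
  have : Complex.log w * (1/(2*(Real.pi:ℂ)*Complex.I) * (L:ℂ)) +
      (starRingEnd ℂ) (Complex.log w) * -(1/(2*(Real.pi:ℂ)*Complex.I) * (L:ℂ))
      = (Complex.log w - (starRingEnd ℂ) (Complex.log w)) * (1/(2*(Real.pi:ℂ)*Complex.I) * (L:ℂ)) := by
    ring
  rw [this, hlog, him]
  have hpi : (Real.pi : ℂ) ≠ 0 := Complex.ofReal_ne_zero.mpr Real.pi_ne_zero
  field_simp
  push_cast
  ring_nf
  rw [mul_assoc (↑w.arg * ↑L : ℂ), mul_inv_cancel₀ hpi, mul_one]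

lemma tendsto_pair {g : ℝ → ℂ} {l : Filter ℝ} (L θ : ℝ)
    (hg : ∀ᶠ ε in l, (g ε).im ≠ 0)
    (harg : Filter.Tendsto (fun ε => (g ε).arg) l (𝓝 θ)) :
    Filter.Tendsto (fun ε => g ε ^ (1/(2*(Real.pi:ℂ)*Complex.I) * (L:ℂ)) *
      ((starRingEnd ℂ) (g ε)) ^ (-(1/(2*(Real.pi:ℂ)*Complex.I) * (L:ℂ)))) l
      (𝓝 (↑(Real.exp (L * θ / Real.pi)) : ℂ)) := by
  have h1 : Filter.Tendsto (fun ε => (↑(Real.exp (L * (g ε).arg / Real.pi)) : ℂ)) l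
      (𝓝 (↑(Real.exp (L * θ / Real.pi)) : ℂ)) := by
    apply Filter.Tendsto.comp Complex.continuous_ofReal.continuousAt
    apply Filter.Tendsto.comp Real.continuous_exp.continuousAt
    exact (harg.const_mul L).div_const Real.pi
  apply h1.congr'
  filter_upwards [hg] with ε hε
  exact (pair_eq hε L).symm

lemma tendsto_arg_zero {g : ℝ → ℂ} {l : Filter ℝ} {r : ℝ} (hr : 0 < r)
    (hg : Filter.Tendsto g l (𝓝 (↑r : ℂ))) :
    Filter.Tendsto (fun ε => (g ε).arg) l (𝓝 0) := by
  have hc : ContinuousAt Complex.arg (↑r : ℂ) :=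
    Complex.continuousAt_arg (by simp [Complex.mem_slitPlane_iff, hr])
  have := hc.tendsto.comp hg
  simpa [Complex.arg_ofReal_of_nonneg hr.le, Function.comp_def] using this

lemma tendsto_arg_neg_pi {g : ℝ → ℂ} {l : Filter ℝ} {r : ℝ} (hr : r < 0)
    (hg : Filter.Tendsto g l (𝓝 (↑r : ℂ))) (him : ∀ᶠ ε in l, (g ε).im < 0) :
    Filter.Tendsto (fun ε => (g ε).arg) l (𝓝 (-Real.pi)) := by
  have key := Complex.tendsto_arg_nhdsWithin_im_neg_of_re_neg_of_im_zero
    (z := (↑r : ℂ)) (by simpa using hr) (by simp)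
  apply key.comp
  rw [tendsto_nhdsWithin_iff]
  exact ⟨hg, him⟩

lemma tendsto_arg_pi {g : ℝ → ℂ} {l : Filter ℝ} {r : ℝ} (hr : r < 0)
    (hg : Filter.Tendsto g l (𝓝 (↑r : ℂ))) (him : ∀ᶠ ε in l, 0 < (g ε).im) :
    Filter.Tendsto (fun ε => (g ε).arg) l (𝓝 (Real.pi)) := by
  have key := Complex.tendsto_arg_nhdsWithin_im_nonneg_of_re_neg_of_im_zero
    (z := (↑r : ℂ)) (by simpa using hr) (by simp)
  apply key.comp
  rw [tendsto_nhdsWithin_iff]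
  exact ⟨hg, him.mono fun ε h => h.le⟩

lemma tendsto_base (u c : ℝ) :
    Filter.Tendsto (fun ε : ℝ => (↑u + ↑ε * Complex.I - ↑c : ℂ)) (nhdsWithin 0 (Set.Ioi 0))
      (𝓝 (↑(u - c) : ℂ)) := by
  have : Continuous (fun ε : ℝ => (↑u + ↑ε * Complex.I - ↑c : ℂ)) := by continuity
  have h0 := this.tendsto 0
  simp only [Complex.ofReal_zero, zero_mul, add_zero] at h0
  have : (↑u - ↑c : ℂ) = ↑(u - c) := by push_cast; ring
  rw [this] at h0
  exact h0.mono_left nhdsWithin_le_nhds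

lemma im_base_pos (u c : ℝ) {ε : ℝ} (hε : ε ∈ Set.Ioi (0:ℝ)) :
    0 < (↑u + ↑ε * Complex.I - ↑c : ℂ).im := by
  simpa using hε

lemma tendsto_csqrt_of_lt {c u : ℝ} (h : c < u) :
    Filter.Tendsto (fun ε : ℝ => csqrt (↑u + ↑ε * Complex.I - ↑c)) (nhdsWithin 0 (Set.Ioi 0))
      (𝓝 (↑(Real.sqrt (u - c)) : ℂ)) := by
  have hc : ContinuousAt (fun w : ℂ => w ^ ((1:ℂ)/2)) (↑(u - c) : ℂ) :=
    continuousAt_cpow_const (by simp [Complex.mem_slitPlane_iff]; linarith)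
  have := hc.tendsto.comp (tendsto_base u c)
  have heq : ((↑(u - c) : ℂ)) ^ ((1:ℂ)/2) = ↑(Real.sqrt (u - c)) := by
    have h0 : (0:ℝ) ≤ u - c := by linarith
    rw [show ((1:ℂ)/2) = ((1/2 : ℝ) : ℂ) by norm_num, ← Complex.ofReal_cpow h0]
    congr 1
    rw [Real.sqrt_eq_rpow]
  rw [heq] at this
  exact this

lemma tendsto_csqrt_of_gt {c u : ℝ} (h : u < c) :
    Filter.Tendsto (fun ε : ℝ => csqrt (↑u + ↑ε * Complex.I - ↑c)) (nhdsWithin 0 (Set.Ioi 0))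
      (𝓝 (↑(Real.sqrt (c - u)) * Complex.I : ℂ)) := by
  have hlog : Filter.Tendsto (fun ε : ℝ => Complex.log (↑u + ↑ε * Complex.I - ↑c))
      (nhdsWithin 0 (Set.Ioi 0)) (𝓝 (↑(Real.log (c - u)) + ↑Real.pi * Complex.I)) := by
    have key := Complex.tendsto_log_nhdsWithin_im_nonneg_of_re_neg_of_im_zero
      (z := (↑(u - c) : ℂ)) (by simp; linarith) (by simp)
    have habs : ‖(↑(u - c) : ℂ)‖ = c - u := by
      rw [Complex.norm_real, Real.norm_eq_abs, abs_of_neg (by linarith)]; ring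
    rw [habs] at key
    apply key.comp
    rw [tendsto_nhdsWithin_iff]
    exact ⟨tendsto_base u c, Filter.eventually_of_mem self_mem_nhdsWithin
      fun ε hε => le_of_lt (im_base_pos u c hε)⟩
  have hexp : Filter.Tendsto (fun ε : ℝ => Complex.exp (Complex.log (↑u + ↑ε * Complex.I - ↑c) * (1/2)))
      (nhdsWithin 0 (Set.Ioi 0))
      (𝓝 (Complex.exp ((↑(Real.log (c - u)) + ↑Real.pi * Complex.I) * (1/2)))) := by
    exact (Complex.continuous_exp.continuousAt.tendsto).comp (hlog.mul_const _)
  have heq : Complex.exp ((↑(Real.log (c - u)) + ↑Real.pi * Complex.I) * (1/2))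
      = ↑(Real.sqrt (c - u)) * Complex.I := by
    rw [add_mul, Complex.exp_add]
    have e1 : (↑(Real.log (c - u)) * (1/2) : ℂ) = ↑(Real.log (c - u) / 2) := by push_cast; ring
    have e2 : (↑Real.pi * Complex.I * (1/2) : ℂ) = ↑(Real.pi/2) * Complex.I := by push_cast; ring
    rw [e1, e2, ← Complex.ofReal_exp, Complex.exp_mul_I]
    have : Real.exp (Real.log (c - u) / 2) = Real.sqrt (c - u) := by
      rw [Real.sqrt_eq_rpow, Real.rpow_def_of_pos (by linarith)]
      ring_nf
    rw [this]
    simp [← Complex.ofReal_cos, ← Complex.ofReal_sin, Real.cos_pi_div_two, Real.sin_pi_div_two]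
  rw [heq] at hexp
  apply hexp.congr'
  filter_upwards [self_mem_nhdsWithin] with ε hε
  have hne : (↑u + ↑ε * Complex.I - ↑c : ℂ) ≠ 0 := by
    intro h0
    have := congrArg Complex.im h0
    simp at this
    exact absurd this (ne_of_gt (by simpa using hε))
  rw [csqrt_def hne]

noncomputable def ratio (c₁ c₂ p q : ℝ) (z : ℂ) : ℂ :=
  (csqrt (z - ↑c₁) * ↑p - csqrt (z - ↑c₂) * ↑q) /
  (csqrt (z - ↑c₁) * ↑p + csqrt (z - ↑c₂) * ↑q)

lemma Rlow_eq_ratio (a b xj : ℝ) (z : ℂ) :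
    Rlow a b xj z = ratio a b (Real.sqrt (b - xj)) (Real.sqrt (a - xj)) z := rfl

lemma Rhigh_eq_ratio (a b xj : ℝ) (z : ℂ) :
    Rhigh a b xj z = ratio b a (Real.sqrt (xj - a)) (Real.sqrt (xj - b)) z := rfl

lemma ratio_neg_swap (c₁ c₂ p q : ℝ) (z : ℂ) :
    ratio c₁ c₂ p q z = -(ratio c₂ c₁ q p z) := by
  unfold ratio
  rw [← neg_div, neg_sub, add_comm]

lemma ratio_im_neg {c₁ c₂ p q u ε : ℝ} (hc : c₁ < c₂) (hp : 0 < p) (hq : 0 < q)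
    (hε : 0 < ε) : (ratio c₁ c₂ p q (↑u + ↑ε * Complex.I)).im < 0 := by
  unfold ratio
  apply im_ratio_neg (by simpa using hε) (by simpa using hε) (by simp) (by simp; linarith) hp hq

lemma ratio_im_pos {c₁ c₂ p q u ε : ℝ} (hc : c₂ < c₁) (hp : 0 < p) (hq : 0 < q)
    (hε : 0 < ε) : 0 < (ratio c₁ c₂ p q (↑u + ↑ε * Complex.I)).im := by
  rw [ratio_neg_swap]
  simp only [Complex.neg_im, neg_pos]
  exact ratio_im_neg hc hq hp hε

lemma ratio_tendsto_gt {c₁ c₂ p q u : ℝ} (h1 : c₁ < u) (h2 : c₂ < u)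
    (hp : 0 < p) (hq : 0 < q) :
    Filter.Tendsto (fun ε : ℝ => ratio c₁ c₂ p q (↑u + ↑ε * Complex.I))
      (nhdsWithin 0 (Set.Ioi 0))
      (𝓝 (↑((Real.sqrt (u - c₁) * p - Real.sqrt (u - c₂) * q) /
            (Real.sqrt (u - c₁) * p + Real.sqrt (u - c₂) * q)) : ℂ)) := by
  have t1 := tendsto_csqrt_of_lt h1
  have t2 := tendsto_csqrt_of_lt h2
  have hden : (↑(Real.sqrt (u - c₁)) * ↑p + ↑(Real.sqrt (u - c₂)) * ↑q : ℂ) ≠ 0 := by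
    have : (0:ℝ) < Real.sqrt (u - c₁) * p + Real.sqrt (u - c₂) * q := by
      have := Real.sqrt_pos.mpr (by linarith : (0:ℝ) < u - c₁)
      have := Real.sqrt_pos.mpr (by linarith : (0:ℝ) < u - c₂)
      positivity
    intro h
    rw [show (↑(Real.sqrt (u - c₁)) * ↑p + ↑(Real.sqrt (u - c₂)) * ↑q : ℂ)
      = ↑(Real.sqrt (u - c₁) * p + Real.sqrt (u - c₂) * q) by push_cast; ring] at h
    exact absurd (Complex.ofReal_eq_zero.mp h) (ne_of_gt this)
  have := ((t1.mul_const (↑p : ℂ)).sub (t2.mul_const (↑q : ℂ))).div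
    ((t1.mul_const (↑p : ℂ)).add (t2.mul_const (↑q : ℂ))) hden
  have hval : (↑((Real.sqrt (u - c₁) * p - Real.sqrt (u - c₂) * q) /
      (Real.sqrt (u - c₁) * p + Real.sqrt (u - c₂) * q)) : ℂ)
      = (↑(Real.sqrt (u - c₁)) * ↑p - ↑(Real.sqrt (u - c₂)) * ↑q) /
        (↑(Real.sqrt (u - c₁)) * ↑p + ↑(Real.sqrt (u - c₂)) * ↑q) := by push_cast; ring
  rw [hval]
  exact this

lemma ratio_tendsto_lt {c₁ c₂ p q u : ℝ} (h1 : u < c₁) (h2 : u < c₂)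
    (hp : 0 < p) (hq : 0 < q) :
    Filter.Tendsto (fun ε : ℝ => ratio c₁ c₂ p q (↑u + ↑ε * Complex.I))
      (nhdsWithin 0 (Set.Ioi 0))
      (𝓝 (↑((Real.sqrt (c₁ - u) * p - Real.sqrt (c₂ - u) * q) /
            (Real.sqrt (c₁ - u) * p + Real.sqrt (c₂ - u) * q)) : ℂ)) := by
  have t1 := tendsto_csqrt_of_gt h1
  have t2 := tendsto_csqrt_of_gt h2
  have hs1 : (0:ℝ) < Real.sqrt (c₁ - u) := Real.sqrt_pos.mpr (by linarith)
  have hs2 : (0:ℝ) < Real.sqrt (c₂ - u) := Real.sqrt_pos.mpr (by linarith)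
  have hdenR : (0:ℝ) < Real.sqrt (c₁ - u) * p + Real.sqrt (c₂ - u) * q := by positivity
  have hden : (↑(Real.sqrt (c₁ - u)) * Complex.I * ↑p + ↑(Real.sqrt (c₂ - u)) * Complex.I * ↑q : ℂ) ≠ 0 := by
    intro h
    have : (Complex.I * (↑(Real.sqrt (c₁ - u) * p + Real.sqrt (c₂ - u) * q) : ℂ)) = 0 := by
      rw [← h]; push_cast; ring
    rcases mul_eq_zero.mp this with h' | h'
    · exact Complex.I_ne_zero h'
    · exact absurd (Complex.ofReal_eq_zero.mp h') (ne_of_gt hdenR)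
  have := ((t1.mul_const (↑p : ℂ)).sub (t2.mul_const (↑q : ℂ))).div
    ((t1.mul_const (↑p : ℂ)).add (t2.mul_const (↑q : ℂ))) hden
  have hval : (↑(Real.sqrt (c₁ - u)) * Complex.I * ↑p - ↑(Real.sqrt (c₂ - u)) * Complex.I * ↑q) /
      (↑(Real.sqrt (c₁ - u)) * Complex.I * ↑p + ↑(Real.sqrt (c₂ - u)) * Complex.I * ↑q)
      = (↑((Real.sqrt (c₁ - u) * p - Real.sqrt (c₂ - u) * q) /
            (Real.sqrt (c₁ - u) * p + Real.sqrt (c₂ - u) * q)) : ℂ) := by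
    rw [show (↑(Real.sqrt (c₁ - u)) * Complex.I * ↑p - ↑(Real.sqrt (c₂ - u)) * Complex.I * ↑q : ℂ)
        = Complex.I * ↑(Real.sqrt (c₁ - u) * p - Real.sqrt (c₂ - u) * q) by push_cast; ring,
      show (↑(Real.sqrt (c₁ - u)) * Complex.I * ↑p + ↑(Real.sqrt (c₂ - u)) * Complex.I * ↑q : ℂ)
        = Complex.I * ↑(Real.sqrt (c₁ - u) * p + Real.sqrt (c₂ - u) * q) by push_cast; ring,
      mul_div_mul_left _ _ Complex.I_ne_zero, Complex.ofReal_div]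
  rw [← hval]
  exact this

lemma csqrt_conj {w : ℂ} (h : w.im ≠ 0) : csqrt ((starRingEnd ℂ) w) = (starRingEnd ℂ) (csqrt w) := by
  rw [csqrt, csqrt, Complex.conj_cpow _ _ (arg_ne_pi_of_im_ne_zero h)]
  have : (starRingEnd ℂ) ((1:ℂ)/2) = (1:ℂ)/2 := by
    rw [map_div₀, map_one, map_ofNat]
  rw [this]

lemma ratio_conj (c₁ c₂ p q : ℝ) {z : ℂ} (h : z.im ≠ 0) :
    ratio c₁ c₂ p q ((starRingEnd ℂ) z) = (starRingEnd ℂ) (ratio c₁ c₂ p q z) := by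
  have h1 : (z - ↑c₁).im ≠ 0 := by simpa using h
  have h2 : (z - ↑c₂).im ≠ 0 := by simpa using h
  have e1 : (starRingEnd ℂ) z - ↑c₁ = (starRingEnd ℂ) (z - ↑c₁) := by
    rw [map_sub, Complex.conj_ofReal]
  have e2 : (starRingEnd ℂ) z - ↑c₂ = (starRingEnd ℂ) (z - ↑c₂) := by
    rw [map_sub, Complex.conj_ofReal]
  unfold ratio
  rw [e1, e2, csqrt_conj h1, csqrt_conj h2, map_div₀, map_sub, map_add, map_mul, map_mul,
    Complex.conj_ofReal, Complex.conj_ofReal]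

lemma sub_eq_conj_add (u ε : ℝ) :
    (↑u - ↑ε * Complex.I : ℂ) = (starRingEnd ℂ) (↑u + ↑ε * Complex.I) := by
  simp [Complex.ext_iff]


lemma pair_tendsto_of_arg {c₁ c₂ p q L u θ : ℝ}
    (him : ∀ ε : ℝ, 0 < ε → (ratio c₁ c₂ p q (↑u + ↑ε * Complex.I)).im ≠ 0)
    (harg : Filter.Tendsto (fun ε : ℝ => (ratio c₁ c₂ p q (↑u + ↑ε * Complex.I)).arg)
      (nhdsWithin 0 (Set.Ioi 0)) (𝓝 θ)) :
    Filter.Tendsto (fun ε : ℝ => ratio c₁ c₂ p q (↑u + ↑ε * Complex.I) ^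
        (1/(2*(Real.pi:ℂ)*Complex.I) * (L:ℂ)) *
      ratio c₁ c₂ p q (↑u - ↑ε * Complex.I) ^ (-(1/(2*(Real.pi:ℂ)*Complex.I) * (L:ℂ))))
      (nhdsWithin 0 (Set.Ioi 0)) (𝓝 (↑(Real.exp (L * θ / Real.pi)) : ℂ)) := by
  refine (tendsto_pair L θ ?_ harg).congr' ?_
  case _ =>
    filter_upwards [self_mem_nhdsWithin] with ε hε
    exact him ε hε
  · filter_upwards [self_mem_nhdsWithin] with ε hε
    rw [sub_eq_conj_add u ε, ratio_conj _ _ _ _ (by simpa using ne_of_gt (show (0:ℝ) < ε from hε))]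

lemma pair_tendsto_one {c₁ c₂ p q L u r : ℝ} (hr : 0 < r)
    (him : ∀ ε : ℝ, 0 < ε → (ratio c₁ c₂ p q (↑u + ↑ε * Complex.I)).im ≠ 0)
    (htend : Filter.Tendsto (fun ε : ℝ => ratio c₁ c₂ p q (↑u + ↑ε * Complex.I))
      (nhdsWithin 0 (Set.Ioi 0)) (𝓝 (↑r : ℂ))) :
    Filter.Tendsto (fun ε : ℝ => ratio c₁ c₂ p q (↑u + ↑ε * Complex.I) ^
        (1/(2*(Real.pi:ℂ)*Complex.I) * (L:ℂ)) *
      ratio c₁ c₂ p q (↑u - ↑ε * Complex.I) ^ (-(1/(2*(Real.pi:ℂ)*Complex.I) * (L:ℂ))))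
      (nhdsWithin 0 (Set.Ioi 0)) (𝓝 (1 : ℂ)) := by
  have := pair_tendsto_of_arg (L := L) him (tendsto_arg_zero hr htend)
  simpa using this

lemma pair_tendsto_low {c₁ c₂ p q L u r : ℝ} (hc : c₁ < c₂) (hp : 0 < p) (hq : 0 < q)
    (hr : r < 0)
    (htend : Filter.Tendsto (fun ε : ℝ => ratio c₁ c₂ p q (↑u + ↑ε * Complex.I))
      (nhdsWithin 0 (Set.Ioi 0)) (𝓝 (↑r : ℂ))) :
    Filter.Tendsto (fun ε : ℝ => ratio c₁ c₂ p q (↑u + ↑ε * Complex.I) ^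
        (1/(2*(Real.pi:ℂ)*Complex.I) * (L:ℂ)) *
      ratio c₁ c₂ p q (↑u - ↑ε * Complex.I) ^ (-(1/(2*(Real.pi:ℂ)*Complex.I) * (L:ℂ))))
      (nhdsWithin 0 (Set.Ioi 0)) (𝓝 (↑(Real.exp (-L)) : ℂ)) := by
  have him : ∀ ε : ℝ, 0 < ε → (ratio c₁ c₂ p q (↑u + ↑ε * Complex.I)).im ≠ 0 :=
    fun ε hε => ne_of_lt (ratio_im_neg hc hp hq hε)
  have himev : ∀ᶠ ε : ℝ in nhdsWithin 0 (Set.Ioi 0),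
      (ratio c₁ c₂ p q (↑u + ↑ε * Complex.I)).im < 0 := by
    filter_upwards [self_mem_nhdsWithin] with ε hε
    exact ratio_im_neg hc hp hq hε
  have harg := tendsto_arg_neg_pi hr htend himev
  have := pair_tendsto_of_arg (L := L) him harg
  have heq : L * (-Real.pi) / Real.pi = -L := by
    field_simp
  rwa [heq] at this

lemma pair_tendsto_high {c₁ c₂ p q L u r : ℝ} (hc : c₂ < c₁) (hp : 0 < p) (hq : 0 < q)
    (hr : r < 0)
    (htend : Filter.Tendsto (fun ε : ℝ => ratio c₁ c₂ p q (↑u + ↑ε * Complex.I))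
      (nhdsWithin 0 (Set.Ioi 0)) (𝓝 (↑r : ℂ))) :
    Filter.Tendsto (fun ε : ℝ => ratio c₁ c₂ p q (↑u + ↑ε * Complex.I) ^
        (1/(2*(Real.pi:ℂ)*Complex.I) * (L:ℂ)) *
      ratio c₁ c₂ p q (↑u - ↑ε * Complex.I) ^ (-(1/(2*(Real.pi:ℂ)*Complex.I) * (L:ℂ))))
      (nhdsWithin 0 (Set.Ioi 0)) (𝓝 (↑(Real.exp L) : ℂ)) := by
  have him : ∀ ε : ℝ, 0 < ε → (ratio c₁ c₂ p q (↑u + ↑ε * Complex.I)).im ≠ 0 :=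
    fun ε hε => ne_of_gt (ratio_im_pos hc hp hq hε)
  have himev : ∀ᶠ ε : ℝ in nhdsWithin 0 (Set.Ioi 0),
      0 < (ratio c₁ c₂ p q (↑u + ↑ε * Complex.I)).im := by
    filter_upwards [self_mem_nhdsWithin] with ε hε
    exact ratio_im_pos hc hp hq hε
  have harg := tendsto_arg_pi hr htend himev
  have := pair_tendsto_of_arg (L := L) him harg
  have heq : L * Real.pi / Real.pi = L := by field_simp
  rwa [heq] at this

lemma sqrt_comb_lt {w1 v1 w2 v2 : ℝ} (hw1 : 0 ≤ w1) (hv1 : 0 ≤ v1) (hw2 : 0 ≤ w2)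
    (h : w1 * v1 < w2 * v2) :
    Real.sqrt w1 * Real.sqrt v1 < Real.sqrt w2 * Real.sqrt v2 := by
  rw [← Real.sqrt_mul hw1, ← Real.sqrt_mul hw2]
  exact Real.sqrt_lt_sqrt (by positivity) h

lemma tel_low (s : ℕ → ℝ) : ∀ n : ℕ, (∀ k, k ≤ n → s k ≠ 0) →
    ∏ k ∈ Finset.range n, (s (k+1) / s k) = s n / s 0 := by
  intro n
  induction n with
  | zero => intro h; rw [Finset.range_zero, Finset.prod_empty, div_self (h 0 le_rfl)]
  | succ n ih =>
    intro h
    rw [Finset.prod_range_succ, ih (fun k hk => h k (by omega))]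
    have h0 : s 0 ≠ 0 := h 0 (by omega)
    have hn' : s n ≠ 0 := h n (by omega)
    field_simp

lemma tel_high (s : ℕ → ℝ) (i : ℕ) (hi : s i ≠ 0) : ∀ n : ℕ, i ≤ n + 1 →
    (∀ k, i ≤ k → k ≤ n → s k ≠ 0) →
    ∏ k ∈ Finset.Icc i n, (s k / s (k+1)) = s i / s (n+1) := by
  intro n
  induction n with
  | zero =>
    intro hin _
    interval_cases i
    · simp
    · simp [hi]
  | succ n ih =>
    intro hin h
    rcases Nat.lt_or_ge (n+1) i with hlt | hge
    · have : i = n + 2 := by omega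
      subst this
      rw [Finset.Icc_eq_empty (by omega)]
      simp [hi]
    · rw [Finset.prod_Icc_succ_top hge, ih hge (fun k h1 h2 => h k h1 (by omega))]
      have hn1 : s (n+1) ≠ 0 := h (n+1) hge (by omega)
      field_simp

lemma x_strict {m : ℕ} {x : ℕ → ℝ} (hx : ∀ j, j < m → x j < x (j+1)) :
    ∀ i k, i < k → k ≤ m → x i < x k := by
  intro i k
  induction k with
  | zero => omega
  | succ k ih =>
    intro hik hkm
    rcases Nat.lt_or_ge i k with h | h
    · exact lt_trans (ih h (by omega)) (hx k (by omega))
    · have : i = k := by omega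
      subst this
      exact hx i (by omega)

lemma x_mono {m : ℕ} {x : ℕ → ℝ} (hx : ∀ j, j < m → x j < x (j+1)) :
    ∀ i k, i ≤ k → k ≤ m → x i ≤ x k := by
  intro i k hik hkm
  rcases Nat.lt_or_ge i k with h | h
  · exact le_of_lt (x_strict hx i k h hkm)
  · have : i = k := by omega
    subst this
    exact le_rfl

lemma szegoDGap_pair_factor (m p : ℕ) (x s : ℕ → ℝ) (u ε : ℝ) (hε : 0 < ε) :
    szegoDGap m p x s (↑u + ↑ε * Complex.I) * szegoDGap m p x s (↑u - ↑ε * Complex.I) =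
    (∏ k ∈ Finset.range (p - 1),
        (Rlow (x (p-1)) (x p) (x k) (↑u + ↑ε * Complex.I) ^ betaCoef s k *
         Rlow (x (p-1)) (x p) (x k) (↑u - ↑ε * Complex.I) ^ (-betaCoef s k))) *
    (∏ k ∈ Finset.Icc (p + 1) m,
        (Rhigh (x (p-1)) (x p) (x k) (↑u + ↑ε * Complex.I) ^ betaCoef s k *
         Rhigh (x (p-1)) (x p) (x k) (↑u - ↑ε * Complex.I) ^ (-betaCoef s k))) := by
  have h1 : (↑u + ↑ε * Complex.I : ℂ).im = ε := by simp
  have h2 : (↑u - ↑ε * Complex.I : ℂ).im = -ε := by simp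
  unfold szegoDGap
  rw [if_pos (by rw [h1]; exact hε), if_neg (by rw [h2]; linarith)]
  rw [Finset.prod_mul_distrib, Finset.prod_mul_distrib]
  ring

lemma betaCoef_eq (s : ℕ → ℝ) (k : ℕ) :
    betaCoef s k = 1/(2*(Real.pi:ℂ)*Complex.I) * ((Real.log (s k / s (k+1)) : ℝ) : ℂ) := rfl

theorem szegoDGap_boundary_product
    (m p : ℕ) (hm : 1 ≤ m) (hp : 1 ≤ p) (hpm : p ≤ m) (x s : ℕ → ℝ)
    (hx : ∀ j, j < m → x j < x (j + 1))
    (hs : ∀ j, 1 ≤ j → j ≤ m → j ≠ p → 0 < s j)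
    (hs0 : s 0 = 1) (hsm : s (m + 1) = 1)
    (j : ℕ) (hj1 : 1 ≤ j) (hjm : j ≤ m) (hjp : j ≠ p)
    (u : ℝ) (hu : u ∈ Set.Ioo (x (j - 1)) (x j)) :
    Filter.Tendsto
      (fun ε : ℝ =>
        szegoDGap m p x s (↑u + ↑ε * Complex.I) * szegoDGap m p x s (↑u - ↑ε * Complex.I))
      (nhdsWithin 0 (Set.Ioi 0)) (nhds (↑(s j) : ℂ)) := by
  have hab : x (p-1) < x p := by
    have := hx (p-1) (by omega)
    rwa [show p - 1 + 1 = p by omega] at this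
  obtain ⟨hu1, hu2⟩ := hu
  rcases lt_or_gt_of_ne hjp with hlt | hgt
  · -- case j < p : u lies to the left of the gap [a,b]
    have hua : u < x (p-1) := lt_of_lt_of_le hu2 (x_mono hx j (p-1) (by omega) (by omega))
    have hub : u < x p := lt_trans hua hab
    have hlowT : ∀ k ∈ Finset.range (p-1), Filter.Tendsto
        (fun ε : ℝ => Rlow (x (p-1)) (x p) (x k) (↑u + ↑ε * Complex.I) ^ betaCoef s k *
          Rlow (x (p-1)) (x p) (x k) (↑u - ↑ε * Complex.I) ^ (-betaCoef s k))
        (nhdsWithin 0 (Set.Ioi 0))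
        (𝓝 (if k < j then (↑(s (k+1) / s k) : ℂ) else 1)) := by
      intro k hk
      rw [Finset.mem_range] at hk
      have hxka : x k < x (p-1) := x_strict hx k (p-1) (by omega) (by omega)
      have hxkb : x k < x p := lt_trans hxka hab
      have hpa : 0 < Real.sqrt (x p - x k) := Real.sqrt_pos.mpr (by linarith)
      have hqa : 0 < Real.sqrt (x (p-1) - x k) := Real.sqrt_pos.mpr (by linarith)
      have htend := ratio_tendsto_lt hua hub hpa hqa
      have hden : 0 < Real.sqrt (x (p-1) - u) * Real.sqrt (x p - x k) +
          Real.sqrt (x p - u) * Real.sqrt (x (p-1) - x k) := by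
        have h1 := Real.sqrt_pos.mpr (show 0 < x (p-1) - u by linarith)
        have h2 := Real.sqrt_pos.mpr (show 0 < x p - u by linarith)
        positivity
      by_cases hkj : k < j
      · rw [if_pos hkj]
        have hxku : x k < u := lt_of_le_of_lt (x_mono hx k (j-1) (by omega) (by omega)) hu1
        have hnum : Real.sqrt (x (p-1) - u) * Real.sqrt (x p - x k) <
            Real.sqrt (x p - u) * Real.sqrt (x (p-1) - x k) :=
          sqrt_comb_lt (by linarith) (by linarith) (by linarith) (by nlinarith)
        have hr : (Real.sqrt (x (p-1) - u) * Real.sqrt (x p - x k) -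
            Real.sqrt (x p - u) * Real.sqrt (x (p-1) - x k)) /
            (Real.sqrt (x (p-1) - u) * Real.sqrt (x p - x k) +
             Real.sqrt (x p - u) * Real.sqrt (x (p-1) - x k)) < 0 :=
          div_neg_of_neg_of_pos (by linarith) hden
        have hsk : 0 < s k := by
          rcases Nat.eq_zero_or_pos k with rfl | hk0
          · rw [hs0]; norm_num
          · exact hs k hk0 (by omega) (by omega)
        have hsk1 : 0 < s (k+1) := hs (k+1) (by omega) (by omega) (by omega)
        have hexp : Real.exp (-(Real.log (s k / s (k+1)))) = s (k+1) / s k := by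
          rw [Real.exp_neg, Real.exp_log (div_pos hsk hsk1), inv_div]
        have := pair_tendsto_low (L := Real.log (s k / s (k+1))) hab hpa hqa hr htend
        rw [hexp] at this
        exact this
      · rw [if_neg hkj]
        have hxku : u < x k := lt_of_lt_of_le hu2 (x_mono hx j k (by omega) (by omega))
        have hnum : Real.sqrt (x p - u) * Real.sqrt (x (p-1) - x k) <
            Real.sqrt (x (p-1) - u) * Real.sqrt (x p - x k) :=
          sqrt_comb_lt (by linarith) (by linarith) (by linarith) (by nlinarith)
        have hr : 0 < (Real.sqrt (x (p-1) - u) * Real.sqrt (x p - x k) -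
            Real.sqrt (x p - u) * Real.sqrt (x (p-1) - x k)) /
            (Real.sqrt (x (p-1) - u) * Real.sqrt (x p - x k) +
             Real.sqrt (x p - u) * Real.sqrt (x (p-1) - x k)) :=
          div_pos (by linarith) hden
        have him : ∀ ε : ℝ, 0 < ε →
            (ratio (x (p-1)) (x p) (Real.sqrt (x p - x k)) (Real.sqrt (x (p-1) - x k))
              (↑u + ↑ε * Complex.I)).im ≠ 0 :=
          fun ε hε => ne_of_lt (ratio_im_neg hab hpa hqa hε)
        exact pair_tendsto_one (L := Real.log (s k / s (k+1))) hr him htend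
    have hhighT : ∀ k ∈ Finset.Icc (p+1) m, Filter.Tendsto
        (fun ε : ℝ => Rhigh (x (p-1)) (x p) (x k) (↑u + ↑ε * Complex.I) ^ betaCoef s k *
          Rhigh (x (p-1)) (x p) (x k) (↑u - ↑ε * Complex.I) ^ (-betaCoef s k))
        (nhdsWithin 0 (Set.Ioi 0)) (𝓝 (1 : ℂ)) := by
      intro k hk
      rw [Finset.mem_Icc] at hk
      have hbxk : x p < x k := x_strict hx p k (by omega) (by omega)
      have haxk : x (p-1) < x k := lt_trans hab hbxk
      have hP : 0 < Real.sqrt (x k - x (p-1)) := Real.sqrt_pos.mpr (by linarith)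
      have hQ : 0 < Real.sqrt (x k - x p) := Real.sqrt_pos.mpr (by linarith)
      have htend := ratio_tendsto_lt hub hua hP hQ
      have hnum : Real.sqrt (x (p-1) - u) * Real.sqrt (x k - x p) <
          Real.sqrt (x p - u) * Real.sqrt (x k - x (p-1)) :=
        sqrt_comb_lt (by linarith) (by linarith) (by linarith) (by nlinarith)
      have hden : 0 < Real.sqrt (x p - u) * Real.sqrt (x k - x (p-1)) +
          Real.sqrt (x (p-1) - u) * Real.sqrt (x k - x p) := by
        have h1 := Real.sqrt_pos.mpr (show 0 < x (p-1) - u by linarith)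
        have h2 := Real.sqrt_pos.mpr (show 0 < x p - u by linarith)
        positivity
      have hr : 0 < (Real.sqrt (x p - u) * Real.sqrt (x k - x (p-1)) -
          Real.sqrt (x (p-1) - u) * Real.sqrt (x k - x p)) /
          (Real.sqrt (x p - u) * Real.sqrt (x k - x (p-1)) +
           Real.sqrt (x (p-1) - u) * Real.sqrt (x k - x p)) :=
        div_pos (by linarith) hden
      have him : ∀ ε : ℝ, 0 < ε →
          (ratio (x p) (x (p-1)) (Real.sqrt (x k - x (p-1))) (Real.sqrt (x k - x p))
            (↑u + ↑ε * Complex.I)).im ≠ 0 :=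
        fun ε hε => ne_of_gt (ratio_im_pos hab hP hQ hε)
      exact pair_tendsto_one (L := Real.log (s k / s (k+1))) hr him htend
    have T := (tendsto_finset_prod (Finset.range (p-1)) hlowT).mul
      (tendsto_finset_prod (Finset.Icc (p+1) m) hhighT)
    have hval : (∏ k ∈ Finset.range (p-1), (if k < j then (↑(s (k+1) / s k) : ℂ) else 1)) *
        (∏ _k ∈ Finset.Icc (p+1) m, (1:ℂ)) = (↑(s j) : ℂ) := by
      rw [Finset.prod_const_one, mul_one]
      have e1 : ∏ k ∈ Finset.range j, (if k < j then (↑(s (k+1) / s k) : ℂ) else 1)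
          = ∏ k ∈ Finset.range (p-1), (if k < j then (↑(s (k+1) / s k) : ℂ) else 1) := by
        apply Finset.prod_subset (Finset.range_subset_range.mpr (by omega))
        intro k _ hk
        rw [Finset.mem_range] at hk
        rw [if_neg hk]
      rw [← e1]
      have e2 : ∏ k ∈ Finset.range j, (if k < j then (↑(s (k+1) / s k) : ℂ) else 1)
          = ∏ k ∈ Finset.range j, (↑(s (k+1) / s k) : ℂ) := by
        apply Finset.prod_congr rfl
        intro k hk
        rw [if_pos (Finset.mem_range.mp hk)]
      rw [e2, ← Complex.ofReal_prod]
      rw [tel_low s j (fun k hk => by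
        rcases Nat.eq_zero_or_pos k with rfl | hk0
        · rw [hs0]; norm_num
        · exact ne_of_gt (hs k hk0 (by omega) (by omega)))]
      rw [hs0, div_one]
    rw [hval] at T
    apply T.congr'
    filter_upwards [self_mem_nhdsWithin] with ε hε
    exact (szegoDGap_pair_factor m p x s u ε hε).symm
  · -- case p < j : u lies to the right of the gap [a,b]
    have hub : x p < u := lt_of_le_of_lt (x_mono hx p (j-1) (by omega) (by omega)) hu1
    have hua : x (p-1) < u := lt_trans hab hub
    have hlowT : ∀ k ∈ Finset.range (p-1), Filter.Tendsto
        (fun ε : ℝ => Rlow (x (p-1)) (x p) (x k) (↑u + ↑ε * Complex.I) ^ betaCoef s k *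
          Rlow (x (p-1)) (x p) (x k) (↑u - ↑ε * Complex.I) ^ (-betaCoef s k))
        (nhdsWithin 0 (Set.Ioi 0)) (𝓝 (1 : ℂ)) := by
      intro k hk
      rw [Finset.mem_range] at hk
      have hxka : x k < x (p-1) := x_strict hx k (p-1) (by omega) (by omega)
      have hxkb : x k < x p := lt_trans hxka hab
      have hpa : 0 < Real.sqrt (x p - x k) := Real.sqrt_pos.mpr (by linarith)
      have hqa : 0 < Real.sqrt (x (p-1) - x k) := Real.sqrt_pos.mpr (by linarith)
      have htend := ratio_tendsto_gt hua hub hpa hqa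
      have hnum : Real.sqrt (u - x p) * Real.sqrt (x (p-1) - x k) <
          Real.sqrt (u - x (p-1)) * Real.sqrt (x p - x k) :=
        sqrt_comb_lt (by linarith) (by linarith) (by linarith) (by nlinarith)
      have hden : 0 < Real.sqrt (u - x (p-1)) * Real.sqrt (x p - x k) +
          Real.sqrt (u - x p) * Real.sqrt (x (p-1) - x k) := by
        have h1 := Real.sqrt_pos.mpr (show 0 < u - x (p-1) by linarith)
        positivity
      have hr : 0 < (Real.sqrt (u - x (p-1)) * Real.sqrt (x p - x k) -
          Real.sqrt (u - x p) * Real.sqrt (x (p-1) - x k)) /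
          (Real.sqrt (u - x (p-1)) * Real.sqrt (x p - x k) +
           Real.sqrt (u - x p) * Real.sqrt (x (p-1) - x k)) :=
        div_pos (by linarith) hden
      have him : ∀ ε : ℝ, 0 < ε →
          (ratio (x (p-1)) (x p) (Real.sqrt (x p - x k)) (Real.sqrt (x (p-1) - x k))
            (↑u + ↑ε * Complex.I)).im ≠ 0 :=
        fun ε hε => ne_of_lt (ratio_im_neg hab hpa hqa hε)
      exact pair_tendsto_one (L := Real.log (s k / s (k+1))) hr him htend
    have hhighT : ∀ k ∈ Finset.Icc (p+1) m, Filter.Tendsto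
        (fun ε : ℝ => Rhigh (x (p-1)) (x p) (x k) (↑u + ↑ε * Complex.I) ^ betaCoef s k *
          Rhigh (x (p-1)) (x p) (x k) (↑u - ↑ε * Complex.I) ^ (-betaCoef s k))
        (nhdsWithin 0 (Set.Ioi 0))
        (𝓝 (if j ≤ k then (↑(s k / s (k+1)) : ℂ) else 1)) := by
      intro k hk
      rw [Finset.mem_Icc] at hk
      have hbxk : x p < x k := x_strict hx p k (by omega) (by omega)
      have haxk : x (p-1) < x k := lt_trans hab hbxk
      have hP : 0 < Real.sqrt (x k - x (p-1)) := Real.sqrt_pos.mpr (by linarith)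
      have hQ : 0 < Real.sqrt (x k - x p) := Real.sqrt_pos.mpr (by linarith)
      have htend := ratio_tendsto_gt hub hua hP hQ
      have hden : 0 < Real.sqrt (u - x p) * Real.sqrt (x k - x (p-1)) +
          Real.sqrt (u - x (p-1)) * Real.sqrt (x k - x p) := by
        have h1 := Real.sqrt_pos.mpr (show 0 < u - x p by linarith)
        positivity
      by_cases hkj : j ≤ k
      · rw [if_pos hkj]
        have hxku : u < x k := lt_of_lt_of_le hu2 (x_mono hx j k (by omega) (by omega))
        have hnum : Real.sqrt (u - x p) * Real.sqrt (x k - x (p-1)) <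
            Real.sqrt (u - x (p-1)) * Real.sqrt (x k - x p) :=
          sqrt_comb_lt (by linarith) (by linarith) (by linarith) (by nlinarith)
        have hr : (Real.sqrt (u - x p) * Real.sqrt (x k - x (p-1)) -
            Real.sqrt (u - x (p-1)) * Real.sqrt (x k - x p)) /
            (Real.sqrt (u - x p) * Real.sqrt (x k - x (p-1)) +
             Real.sqrt (u - x (p-1)) * Real.sqrt (x k - x p)) < 0 :=
          div_neg_of_neg_of_pos (by linarith) hden
        have hsk : 0 < s k := hs k (by omega) (by omega) (by omega)
        have hsk1 : 0 < s (k+1) := by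
          rcases Nat.lt_or_ge k m with hkm | hkm
          · exact hs (k+1) (by omega) (by omega) (by omega)
          · have : k = m := by omega
            rw [this, hsm]; norm_num
        have hexp : Real.exp (Real.log (s k / s (k+1))) = s k / s (k+1) :=
          Real.exp_log (div_pos hsk hsk1)
        have := pair_tendsto_high (L := Real.log (s k / s (k+1))) hab hP hQ hr htend
        rw [hexp] at this
        exact this
      · rw [if_neg hkj]
        have hxku : x k < u := lt_of_le_of_lt (x_mono hx k (j-1) (by omega) (by omega)) hu1
        have hnum : Real.sqrt (u - x (p-1)) * Real.sqrt (x k - x p) <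
            Real.sqrt (u - x p) * Real.sqrt (x k - x (p-1)) :=
          sqrt_comb_lt (by linarith) (by linarith) (by linarith) (by nlinarith)
        have hr : 0 < (Real.sqrt (u - x p) * Real.sqrt (x k - x (p-1)) -
            Real.sqrt (u - x (p-1)) * Real.sqrt (x k - x p)) /
            (Real.sqrt (u - x p) * Real.sqrt (x k - x (p-1)) +
             Real.sqrt (u - x (p-1)) * Real.sqrt (x k - x p)) :=
          div_pos (by linarith) hden
        have him : ∀ ε : ℝ, 0 < ε →
            (ratio (x p) (x (p-1)) (Real.sqrt (x k - x (p-1))) (Real.sqrt (x k - x p))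
              (↑u + ↑ε * Complex.I)).im ≠ 0 :=
          fun ε hε => ne_of_gt (ratio_im_pos hab hP hQ hε)
        exact pair_tendsto_one (L := Real.log (s k / s (k+1))) hr him htend
    have T := (tendsto_finset_prod (Finset.range (p-1)) hlowT).mul
      (tendsto_finset_prod (Finset.Icc (p+1) m) hhighT)
    have hval : (∏ _k ∈ Finset.range (p-1), (1:ℂ)) *
        (∏ k ∈ Finset.Icc (p+1) m, (if j ≤ k then (↑(s k / s (k+1)) : ℂ) else 1))
        = (↑(s j) : ℂ) := by
      rw [Finset.prod_const_one, one_mul]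
      have e1 : ∏ k ∈ Finset.Icc j m, (if j ≤ k then (↑(s k / s (k+1)) : ℂ) else 1)
          = ∏ k ∈ Finset.Icc (p+1) m, (if j ≤ k then (↑(s k / s (k+1)) : ℂ) else 1) := by
        apply Finset.prod_subset
        · apply Finset.Icc_subset_Icc_left (by omega)
        · intro k hk1 hk2
          rw [Finset.mem_Icc] at hk1
          rw [Finset.mem_Icc] at hk2
          rw [if_neg (by omega)]
      rw [← e1]
      have e2 : ∏ k ∈ Finset.Icc j m, (if j ≤ k then (↑(s k / s (k+1)) : ℂ) else 1)
          = ∏ k ∈ Finset.Icc j m, (↑(s k / s (k+1)) : ℂ) := by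
        apply Finset.prod_congr rfl
        intro k hk
        rw [if_pos (Finset.mem_Icc.mp hk).1]
      rw [e2, ← Complex.ofReal_prod]
      have hsj : s j ≠ 0 := ne_of_gt (hs j (by omega) (by omega) (by omega))
      rw [tel_high s j hsj m (by omega) (fun k h1 h2 => ne_of_gt (hs k (by omega) (by omega) (by omega)))]
      rw [hsm, div_one]
    rw [hval] at T
    apply T.congr'
    filter_upwards [self_mem_nhdsWithin] with ε hε
    exact (szegoDGap_pair_factor m p x s u ε hε).symm
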